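/- If F is an A-coherent O_X-module on a locally ringed space X (i.e., F admits a global presentation O_X^m → O_X^n → F → 0 with m, n finite), then there exists a finitely presented module M over A = Γ(X, O_X) such that F is isomorphic to φ*(M~), where φ : X → Spec(A) is the canonical morphism and M~ is the quasi-coherent sheaf on Spec(A) associated to M. -/

import Mathlib

/-!
Statement 0. If `F` is an `A`-coherent `O_X`-module on a locally ringed space `X`
(i.e. `F` admits a global presentation `O_X^m → O_X^n → F → 0` with `m, n` finite),
then there exists a finitely presented module `M` over `A = Γ(X, O_X)` such that
`F ≅ φ^*(M~)`, where `φ : X → Spec A` is the canonical morphism.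

Since the composite functor `M ↦ φ^*(M~)` is (by the adjunctions `tilde ⊣ Γ` on
`Spec A` and `φ^* ⊣ φ_*`) the left adjoint of the global sections functor
`G ↦ Γ(X, G)` (an `A`-module), the isomorphism `F ≅ φ^*(M~)` is expressed
faithfully by the corresponding universal property: there is an `A`-linear map
`ε : M → Γ(X, F)` such that for every `O_X`-module `G`, composition with `ε`
induces a bijection `Hom_{O_X}(F, G) ≃ Hom_A(M, Γ(X, G))`.
-/

universe u

open CategoryTheory CategoryTheory.Limits Opposite AlgebraicGeometry TopologicalSpace

/-- The underlying sheaf of `RingCat` of a locally ringed space. -/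
noncomputable def AlgebraicGeometry.LocallyRingedSpace.ringCatSheaf
    (X : LocallyRingedSpace.{u}) : Sheaf (Opens.grothendieckTopology X.carrier) RingCat.{u} :=
  (sheafCompose (Opens.grothendieckTopology X.carrier) (forget₂ CommRingCat RingCat)).obj X.sheaf

/-- An `O_X`-module `F` is `A`-coherent if there are integers `m, n ≥ 1` and an exact
sequence `O_X^m → O_X^n → F → 0`. -/
noncomputable def SheafOfModules.ACoherent {X : TopCat.{u}} {R : Sheaf (Opens.grothendieckTopology X) RingCat.{u}}
    (F : SheafOfModules.{u} R) : Prop :=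
  ∃ (m n : ℕ) (u : SheafOfModules.free (R := R) (ULift.{u} (Fin m)) ⟶
      SheafOfModules.free (ULift.{u} (Fin n)))
    (p : SheafOfModules.free (ULift.{u} (Fin n)) ⟶ F) (w : u ≫ p = 0),
    1 ≤ m ∧ 1 ≤ n ∧ Epi p ∧ (ShortComplex.mk u p w).Exact

/-!
Global sections `Γ` (evaluation at the terminal open `⊤`) satisfy
`Hom(O_X, G) ≃ Hom_A(A, Γ G)`, because a section of a presheaf is determined by its value
at a terminal object. Being additive, `Γ` preserves finite coproducts, so the same holds with
`O_X^n` in place of `O_X`, and `Γ(O_X^n) ≅ A^n`. Put `M := coker(Γ(O_X^m) → Γ(O_X^n))`: maps out of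
`F = coker(O_X^m → O_X^n)` and `A`-linear maps out of `M` are then both the maps out of `O_X^n`
killing `O_X^m`, and `M` is finitely presented.
-/

namespace CategoryTheory.Functor

variable {C D : Type*} [Category C] [Category D] (Γ : C ⥤ D)

theorem bijective_map_of_isColimit_cofan {ι : Type*} {P : ι → C} {c : Cofan P}
    (hc : IsColimit c) [PreservesColimit (Discrete.functor P) Γ] (G : C)
    (h : ∀ i, Function.Bijective (Γ.map : (P i ⟶ G) → _)) :
    Function.Bijective (Γ.map : (c.pt ⟶ G) → _) := by
  have hc' := isColimitOfPreserves Γ hc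
  constructor
  · intro f g hfg
    refine Cofan.IsColimit.hom_ext hc _ _ fun i ↦ (h i).1 ?_
    rw [Γ.map_comp, Γ.map_comp, hfg]
  · intro φ
    choose g hg using fun i ↦ (h i).2 (Γ.map (c.inj i) ≫ φ)
    refine ⟨Cofan.IsColimit.desc hc g, hc'.hom_ext fun ⟨i⟩ ↦ ?_⟩
    change Γ.map (c.inj i) ≫ _ = Γ.map (c.inj i) ≫ φ
    rw [← Γ.map_comp, Cofan.IsColimit.fac, hg]

variable [HasZeroMorphisms C] [HasZeroMorphisms D] [Γ.PreservesZeroMorphisms]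

theorem bijective_comp_map_of_isColimit_cokernelCofork {P₁ P₀ : C} {u : P₁ ⟶ P₀} {c : CokernelCofork u}
    (hc : IsColimit c) {d : CokernelCofork (Γ.map u)} (hd : IsColimit d)
    {ε : d.pt ⟶ Γ.obj c.pt} (hε : d.π ≫ ε = Γ.map c.π) (G : C)
    (h₀ : Function.Bijective (Γ.map : (P₀ ⟶ G) → _))
    (h₁ : Function.Injective (Γ.map : (P₁ ⟶ G) → _)) :
    Function.Bijective (fun f : c.pt ⟶ G ↦ ε ≫ Γ.map f) := by
  constructor
  · intro f g hfg
    refine Cofork.IsColimit.hom_ext hc (h₀.1 ?_)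
    simp only [Γ.map_comp, ← hε, Category.assoc]
    exact congrArg (d.π ≫ ·) hfg
  · intro σ
    obtain ⟨g, hg⟩ := h₀.2 (d.π ≫ σ)
    have hug : u ≫ g = 0 :=
      h₁ (by rw [Γ.map_comp, hg, CokernelCofork.condition_assoc, Γ.map_zero, zero_comp])
    obtain ⟨f, hf⟩ := CokernelCofork.IsColimit.desc' hc g hug
    refine ⟨f, Cofork.IsColimit.hom_ext hd ?_⟩
    rw [← Category.assoc, hε, ← Γ.map_comp, hf, hg]

end CategoryTheory.Functor

theorem Module.FinitePresentation.quotient_range {A M N : Type*} [Ring A] [AddCommGroup M]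
    [Module A M] [AddCommGroup N] [Module A N] [Module.Finite A M]
    [Module.FinitePresentation A N] (f : M →ₗ[A] N) :
    Module.FinitePresentation A (N ⧸ LinearMap.range f) :=
  Module.finitePresentation_of_surjective _ (LinearMap.range f).mkQ_surjective
    (by rw [Submodule.ker_mkQ]; exact Submodule.fg_range f)

namespace PresheafOfModules

universe v

variable {C : Type*} [Category C] {R : Cᵒᵖ ⥤ RingCat.{u}}

theorem bijective_sections_eval_of_isInitial (M : PresheafOfModules.{v} R) {X : Cᵒᵖ}
    (hX : IsInitial X) : Function.Bijective (fun s : M.sections ↦ s.eval X) := by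
  constructor
  · intro s t hst
    ext Y
    rw [← sections_property s (hX.to Y), ← sections_property t (hX.to Y)]
    exact congrArg _ hst
  · intro x
    refine ⟨sectionsMk (fun Y ↦ M.map (hX.to Y) x) fun Y Z f ↦ ?_, ?_⟩
    · rw [← M.map_comp_apply, hX.hom_ext (hX.to Y ≫ f) (hX.to Z)]
    · change M.map (hX.to X) x = x
      rw [hX.hom_ext (hX.to X) (𝟙 X), M.map_id]
      rfl

end PresheafOfModules

namespace SheafOfModules

variable {C : Type*} [Category C] {J : GrothendieckTopology C} {R : Sheaf J RingCat.{u}}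

theorem bijective_evaluation_map_unit {X : Cᵒᵖ} (hX : IsInitial X) (G : SheafOfModules.{u} R) :
    Function.Bijective ((evaluation R X).map : (unit R ⟶ G) → _) := by
  let e : ((evaluation R X).obj (unit R) ⟶ (evaluation R X).obj G) ≃ G.val.obj X :=
    ModuleCat.homEquiv.trans (LinearMap.ringLmapEquivSelf (R.obj.obj X) ℤ (G.val.obj X)).toEquiv
  have he : e ∘ (evaluation R X).map = (fun s : G.sections ↦ s.eval X) ∘ G.unitHomEquiv := rfl
  rw [← e.bijective.of_comp_iff', he]
  exact (G.val.bijective_sections_eval_of_isInitial hX).comp G.unitHomEquiv.bijective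

instance (X : Cᵒᵖ) : (evaluation R X).Additive :=
  inferInstanceAs (forget R ⋙ PresheafOfModules.evaluation R.obj X).Additive

variable [HasWeakSheafify J AddCommGrpCat.{u}] [J.WEqualsLocallyBijective AddCommGrpCat.{u}]

theorem bijective_evaluation_map_free {X : Cᵒᵖ} (hX : IsInitial X) (I : Type u) [Finite I]
    (G : SheafOfModules.{u} R) :
    Function.Bijective ((evaluation R X).map : (free (R := R) I ⟶ G) → _) :=
  (evaluation R X).bijective_map_of_isColimit_cofan (isColimitFreeCofan I) G
    fun _ ↦ bijective_evaluation_map_unit hX G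

instance finitePresentation_evaluation_free (X : Cᵒᵖ) (I : Type u) [Finite I] :
    Module.FinitePresentation (R.obj.obj X) ((evaluation R X).obj (free I)) := by
  classical
  have := Module.finitePresentation_of_projective (R.obj.obj X) (DirectSum I fun _ ↦ R.obj.obj X)
  let e : (evaluation R X).obj (free I) ≅ .of _ (DirectSum I fun _ ↦ R.obj.obj X) :=
    (isColimitCofanMkObjOfIsColimit (evaluation R X) _ _
      (isColimitFreeCofan I)).coconePointUniqueUpToIso
      (ModuleCat.coproductCoconeIsColimit fun _ : I ↦ .of (R.obj.obj X) (R.obj.obj X))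
  exact .of_equiv e.toLinearEquiv.symm

end SheafOfModules

theorem acoherent_is_pullback_of_finitely_presented_module
    (X : LocallyRingedSpace.{u})
    (F : SheafOfModules.{u} X.ringCatSheaf)
    (hF : F.ACoherent) :
    ∃ (M : ModuleCat.{u} (X.ringCatSheaf.val.obj (op ⊤))),
      Module.FinitePresentation (X.ringCatSheaf.val.obj (op ⊤)) M ∧
      ∃ (ε : M ⟶ F.val.obj (op ⊤)),
        ∀ (G : SheafOfModules.{u} X.ringCatSheaf),
          Function.Bijective (fun (f : F ⟶ G) => ε ≫ f.val.app (op ⊤)) := by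
  obtain ⟨m, n, u, p, w, -, -, hp, hexact⟩ := hF
  let Γ := SheafOfModules.evaluation X.ringCatSheaf (op ⊤)
  have hTop : IsInitial (op (⊤ : Opens X)) := isTerminalTop.op
  have : Epi p := hp
  have hd := ModuleCat.cokernelIsColimit (Γ.map u)
  obtain ⟨ε, hε⟩ := CokernelCofork.IsColimit.desc' hd (Γ.map p)
    (by rw [← Γ.map_comp, w, Γ.map_zero])
  refine ⟨_, Module.FinitePresentation.quotient_range _, ε, fun G ↦ ?_⟩
  have h₀ := SheafOfModules.bijective_evaluation_map_free hTop (ULift.{u} (Fin n)) G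
  have h₁ := SheafOfModules.bijective_evaluation_map_free hTop (ULift.{u} (Fin m)) G
  exact Γ.bijective_comp_map_of_isColimit_cokernelCofork hexact.gIsCokernel hd hε G h₀ h₁.1
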